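/- Let f : ℝ^m → ℝ and g : ℝ^n → ℝ be convex, X ⊆ ℝ^m, Y ⊆ ℝ^n closed convex, A ∈ ℝ^{l×m}, B ∈ ℝ^{l×n}, c ∈ ℝ^l, τ ≠ 0, M = X × Y × ℝ^l, φ(x, y) = f(x) + g(y), J(x, y, λ) = τ(−Aᵀλ, −Bᵀλ, Ax + By − c), and let G be a symmetric positive semidefinite (m+n+l)×(m+n+l) matrix. Let {w^k} be a sequence with w^{k+1} ∈ M satisfying, for every k ≥ 0, φ(u) − φ(u^{k+1}) + ⟨w − w^{k+1}, J(w^{k+1}) + G(w^{k+1} − w^k)⟩ ≥ 0 for all w ∈ M. Define the ergodic averages w_t = (1/(t+1)) Σ_{k=0}^{t} w^{k+1} and u_t = (1/(t+1)) Σ_{k=0}^{t} u^{k+1}. Then for every t ≥ 0 and every w ∈ M, φ(u_t) − φ(u) + ⟨w_t − w, J(w)⟩ ≤ (1/(2(t+1))) ‖w^0 − w‖_G². -/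

import Mathlib

/-!
Testing the `k`-th variational inequality at `v`, monotonicity of `J` (here `J` is affine with
skew-symmetric linear part) and the three-point identity for the `G`-seminorm bound the gap
`φ wᵏ⁺¹ - φ v + ⟨wᵏ⁺¹ - v, J v⟩` by half the decrease of `‖wᵏ - v‖²_G`. Summing telescopes,
and since the gap is convex in `wᵏ⁺¹`, Jensen's inequality passes the bound to the average.
-/

open Matrix Finset

section

variable {ι : Type*} [Fintype ι]

theorem Matrix.PosSemidef.two_mul_dotProduct_mulVec_le {G : Matrix ι ι ℝ} (hG : G.PosSemidef)
    (a b v : ι → ℝ) :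
    2 * ((v - a) ⬝ᵥ (G *ᵥ (a - b))) ≤
      (b - v) ⬝ᵥ (G *ᵥ (b - v)) - (a - v) ⬝ᵥ (G *ᵥ (a - v)) := by
  have hsymm : ∀ x y : ι → ℝ, x ⬝ᵥ (G *ᵥ y) = y ⬝ᵥ (G *ᵥ x) := fun x y => by
    rw [dotProduct_mulVec, ← mulVec_transpose, dotProduct_comm,
      ← conjTranspose_eq_transpose_of_trivial, hG.isHermitian.eq]
  have hnonneg : 0 ≤ (a - b) ⬝ᵥ (G *ᵥ (a - b)) := by
    simpa only [star_trivial] using hG.dotProduct_mulVec_nonneg (a - b)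
  -- the two sides differ by exactly `(a - b) ⬝ᵥ G (a - b)`
  simp only [mulVec_sub, dotProduct_sub, sub_dotProduct] at hnonneg ⊢
  linarith [hsymm a b, hsymm a v, hsymm b v]

theorem ConvexOn.map_average_range_le {E : Type*} [AddCommGroup E] [Module ℝ E] {h : E → ℝ}
    (hh : ConvexOn ℝ Set.univ h) (x : ℕ → E) (t : ℕ) :
    h ((1 / ((t : ℝ) + 1)) • ∑ k ∈ range (t + 1), x k) ≤
      (1 / ((t : ℝ) + 1)) * ∑ k ∈ range (t + 1), h (x k) := by
  rw [smul_sum, mul_sum]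
  refine hh.map_sum_le (fun _ _ => by positivity) ?_ fun _ _ => Set.mem_univ _
  rw [sum_const, card_range, nsmul_eq_mul]
  push_cast
  field_simp

theorem ConvexOn.add_dotProduct_sub {φ : (ι → ℝ) → ℝ} {s : Set (ι → ℝ)} (hφ : ConvexOn ℝ s φ)
    (v y : ι → ℝ) : ConvexOn ℝ s fun x => φ x - φ v + (x - v) ⬝ᵥ y := by
  refine ((hφ.add (((dotProductBilin ℝ ℝ).flip y).convexOn hφ.1)).add_const
    (-(φ v + v ⬝ᵥ y))).congr fun x _ => ?_
  simp only [Pi.add_apply, LinearMap.flip_apply, dotProductBilin_apply_apply, sub_dotProduct]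
  ring

theorem proximal_step_gap_le {φ : (ι → ℝ) → ℝ} {J : (ι → ℝ) → ι → ℝ}
    (hJ : ∀ a b, 0 ≤ (a - b) ⬝ᵥ (J a - J b)) {G : Matrix ι ι ℝ} (hG : G.PosSemidef)
    {a b v : ι → ℝ} (hstep : φ v - φ a + (v - a) ⬝ᵥ (J a + G *ᵥ (a - b)) ≥ 0) :
    φ a - φ v + (a - v) ⬝ᵥ J v ≤
      ((b - v) ⬝ᵥ (G *ᵥ (b - v)) - (a - v) ⬝ᵥ (G *ᵥ (a - v))) / 2 := by
  have hmono : (v - a) ⬝ᵥ J a + (a - v) ⬝ᵥ J v ≤ 0 := by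
    have := hJ a v
    rw [dotProduct_sub] at this
    rw [← neg_sub a v, neg_dotProduct]
    linarith
  rw [dotProduct_add] at hstep
  linarith [hG.two_mul_dotProduct_mulVec_le a b v]

theorem proximal_ergodic_gap_le {φ : (ι → ℝ) → ℝ} (hφ : ConvexOn ℝ Set.univ φ)
    {J : (ι → ℝ) → ι → ℝ} (hJ : ∀ a b, 0 ≤ (a - b) ⬝ᵥ (J a - J b))
    {G : Matrix ι ι ℝ} (hG : G.PosSemidef) (w : ℕ → ι → ℝ) (v : ι → ℝ)
    (hstep : ∀ k, φ v - φ (w (k + 1)) +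
      (v - w (k + 1)) ⬝ᵥ (J (w (k + 1)) + G *ᵥ (w (k + 1) - w k)) ≥ 0) (t : ℕ) :
    φ ((1 / ((t : ℝ) + 1)) • ∑ k ∈ range (t + 1), w (k + 1)) - φ v +
        ((1 / ((t : ℝ) + 1)) • ∑ k ∈ range (t + 1), w (k + 1) - v) ⬝ᵥ J v ≤
      1 / (2 * ((t : ℝ) + 1)) * ((w 0 - v) ⬝ᵥ (G *ᵥ (w 0 - v))) := by
  set Q : (ι → ℝ) → ℝ := fun x => (x - v) ⬝ᵥ (G *ᵥ (x - v))
  have htelescope : ∑ k ∈ range (t + 1), (φ (w (k + 1)) - φ v + (w (k + 1) - v) ⬝ᵥ J v) ≤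
      Q (w 0) / 2 :=
    calc _ ≤ ∑ k ∈ range (t + 1), (Q (w k) - Q (w (k + 1))) / 2 :=
          sum_le_sum fun k _ => proximal_step_gap_le hJ hG (hstep k)
      _ = (Q (w 0) - Q (w (t + 1))) / 2 := by
          rw [← sum_div, sum_range_sub' (fun k => Q (w k))]
      _ ≤ Q (w 0) / 2 := by
          have : 0 ≤ Q (w (t + 1)) := by
            simpa only [star_trivial] using hG.dotProduct_mulVec_nonneg (w (t + 1) - v)
          linarith
  calc _ ≤ 1 / ((t : ℝ) + 1) *
          ∑ k ∈ range (t + 1), (φ (w (k + 1)) - φ v + (w (k + 1) - v) ⬝ᵥ J v) :=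
        (hφ.add_dotProduct_sub v (J v)).map_average_range_le (fun k => w (k + 1)) t
    _ ≤ 1 / ((t : ℝ) + 1) * (Q (w 0) / 2) := by gcongr
    _ = 1 / (2 * ((t : ℝ) + 1)) * Q (w 0) := by field_simp

end

section

variable {α β γ : Type*} [Fintype α] [Fintype β] [Fintype γ]

/-- The operator `J` of the variational-inequality formulation of `min f x + g y` subject to
`Ax + By = c`, scaled by `τ`. -/
noncomputable def saddleOperator (A : Matrix γ α ℝ) (B : Matrix γ β ℝ) (c : γ → ℝ) (τ : ℝ)
    (w : α ⊕ β ⊕ γ → ℝ) : α ⊕ β ⊕ γ → ℝ :=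
  Sum.elim (τ • -(Aᵀ *ᵥ (w ∘ Sum.inr ∘ Sum.inr)))
    (Sum.elim (τ • -(Bᵀ *ᵥ (w ∘ Sum.inr ∘ Sum.inr)))
      (τ • (A *ᵥ (w ∘ Sum.inl) + B *ᵥ (w ∘ Sum.inr ∘ Sum.inl) - c)))

theorem saddleOperator_sub_saddleOperator (A : Matrix γ α ℝ) (B : Matrix γ β ℝ) (c : γ → ℝ)
    (τ : ℝ) (a b : α ⊕ β ⊕ γ → ℝ) :
    saddleOperator A B c τ a - saddleOperator A B c τ b = saddleOperator A B 0 τ (a - b) := by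
  ext (i | i | i) <;> simp [saddleOperator, Pi.sub_comp, mulVec_sub] <;> ring

theorem dotProduct_saddleOperator_zero (A : Matrix γ α ℝ) (B : Matrix γ β ℝ) (τ : ℝ)
    (p : α ⊕ β ⊕ γ → ℝ) : p ⬝ᵥ saddleOperator A B 0 τ p = 0 := by
  rw [saddleOperator, sub_zero, ← Sum.elim_comp_inl_inr p, ← Sum.elim_comp_inl_inr (p ∘ Sum.inr)]
  simp only [sumElim_dotProduct_sumElim, Function.comp_def, Sum.elim_inl, Sum.elim_inr]
  simp only [dotProduct_smul, dotProduct_neg, dotProduct_add, dotProduct_mulVec, vecMul_transpose]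
  rw [← dotProduct_mulVec, ← dotProduct_mulVec, dotProduct_comm _ (A *ᵥ _),
    dotProduct_comm _ (B *ᵥ _)]
  simp only [smul_eq_mul]
  ring

theorem sub_dotProduct_saddleOperator_sub (A : Matrix γ α ℝ) (B : Matrix γ β ℝ) (c : γ → ℝ)
    (τ : ℝ) (a b : α ⊕ β ⊕ γ → ℝ) :
    (a - b) ⬝ᵥ (saddleOperator A B c τ a - saddleOperator A B c τ b) = 0 := by
  rw [saddleOperator_sub_saddleOperator, dotProduct_saddleOperator_zero]

end

theorem stmt10_general {m n l : ℕ}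
    (f : (Fin m → ℝ) → ℝ) (g : (Fin n → ℝ) → ℝ)
    (hf : ConvexOn ℝ Set.univ f) (hg : ConvexOn ℝ Set.univ g)
    (A : Matrix (Fin l) (Fin m) ℝ) (B : Matrix (Fin l) (Fin n) ℝ)
    (c : Fin l → ℝ) (τ : ℝ)
    (M : Set ((Fin m ⊕ (Fin n ⊕ Fin l)) → ℝ))
    (φ : ((Fin m ⊕ (Fin n ⊕ Fin l)) → ℝ) → ℝ)
    (hφ : φ = fun w => f (w ∘ Sum.inl) + g (w ∘ Sum.inr ∘ Sum.inl))
    (J : ((Fin m ⊕ (Fin n ⊕ Fin l)) → ℝ) → ((Fin m ⊕ (Fin n ⊕ Fin l)) → ℝ))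
    (hJ : J = fun w => Sum.elim (τ • (-(Aᵀ *ᵥ (w ∘ Sum.inr ∘ Sum.inr))))
        (Sum.elim (τ • (-(Bᵀ *ᵥ (w ∘ Sum.inr ∘ Sum.inr))))
          (τ • (A *ᵥ (w ∘ Sum.inl) + B *ᵥ (w ∘ Sum.inr ∘ Sum.inl) - c))))
    (G : Matrix (Fin m ⊕ (Fin n ⊕ Fin l)) (Fin m ⊕ (Fin n ⊕ Fin l)) ℝ)
    (hG : G.PosSemidef)
    (w : ℕ → ((Fin m ⊕ (Fin n ⊕ Fin l)) → ℝ))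
    (hineq : ∀ k : ℕ, ∀ v ∈ M,
      φ v - φ (w (k + 1)) +
        (v - w (k + 1)) ⬝ᵥ (J (w (k + 1)) + G *ᵥ (w (k + 1) - w k)) ≥ 0)
    (wbar : ℕ → ((Fin m ⊕ (Fin n ⊕ Fin l)) → ℝ))
    (hwbar : ∀ t : ℕ,
      wbar t = (1 / ((t : ℝ) + 1)) • ∑ k ∈ Finset.range (t + 1), w (k + 1)) :
    ∀ t : ℕ, ∀ v ∈ M,
      φ (wbar t) - φ v + (wbar t - v) ⬝ᵥ J v ≤
        (1 / (2 * ((t : ℝ) + 1))) * ((w 0 - v) ⬝ᵥ (G *ᵥ (w 0 - v))) := by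
  intro t v hv
  have hφconv : ConvexOn ℝ Set.univ φ := by
    subst hφ
    exact (hf.comp_linearMap (LinearMap.funLeft ℝ ℝ Sum.inl)).add
      (hg.comp_linearMap (LinearMap.funLeft ℝ ℝ (Sum.inr ∘ Sum.inl)))
  have hJmono : ∀ a b, 0 ≤ (a - b) ⬝ᵥ (J a - J b) := fun a b => by
    subst hJ
    exact (sub_dotProduct_saddleOperator_sub A B c τ a b).ge
  rw [hwbar t]
  exact proximal_ergodic_gap_le hφconv hJmono hG w v (fun k => hineq k v hv) t

/-- worst-case `O(1/t)` ergodic convergence rate of the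
parameterized proximal point iteration. -/
theorem stmt10 {m n l : ℕ}
    (f : (Fin m → ℝ) → ℝ) (g : (Fin n → ℝ) → ℝ)
    (hf : ConvexOn ℝ Set.univ f) (hg : ConvexOn ℝ Set.univ g)
    (X : Set (Fin m → ℝ)) (Y : Set (Fin n → ℝ))
    (hXcl : IsClosed X) (hXcv : Convex ℝ X) (hYcl : IsClosed Y) (hYcv : Convex ℝ Y)
    (A : Matrix (Fin l) (Fin m) ℝ) (B : Matrix (Fin l) (Fin n) ℝ)
    (c : Fin l → ℝ) (τ : ℝ) (hτ : τ ≠ 0)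
    (M : Set ((Fin m ⊕ (Fin n ⊕ Fin l)) → ℝ))
    (hM : M = {w | (w ∘ Sum.inl) ∈ X ∧ (w ∘ Sum.inr ∘ Sum.inl) ∈ Y})
    (φ : ((Fin m ⊕ (Fin n ⊕ Fin l)) → ℝ) → ℝ)
    (hφ : φ = fun w => f (w ∘ Sum.inl) + g (w ∘ Sum.inr ∘ Sum.inl))
    (J : ((Fin m ⊕ (Fin n ⊕ Fin l)) → ℝ) → ((Fin m ⊕ (Fin n ⊕ Fin l)) → ℝ))
    (hJ : J = fun w => Sum.elim (τ • (-(Aᵀ *ᵥ (w ∘ Sum.inr ∘ Sum.inr))))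
        (Sum.elim (τ • (-(Bᵀ *ᵥ (w ∘ Sum.inr ∘ Sum.inr))))
          (τ • (A *ᵥ (w ∘ Sum.inl) + B *ᵥ (w ∘ Sum.inr ∘ Sum.inl) - c))))
    (G : Matrix (Fin m ⊕ (Fin n ⊕ Fin l)) (Fin m ⊕ (Fin n ⊕ Fin l)) ℝ)
    (hG : G.PosSemidef)
    (w : ℕ → ((Fin m ⊕ (Fin n ⊕ Fin l)) → ℝ))
    (hwM : ∀ k : ℕ, w (k + 1) ∈ M)
    (hineq : ∀ k : ℕ, ∀ v ∈ M,
      φ v - φ (w (k + 1)) +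
        (v - w (k + 1)) ⬝ᵥ (J (w (k + 1)) + G *ᵥ (w (k + 1) - w k)) ≥ 0)
    (wbar : ℕ → ((Fin m ⊕ (Fin n ⊕ Fin l)) → ℝ))
    (hwbar : ∀ t : ℕ,
      wbar t = (1 / ((t : ℝ) + 1)) • ∑ k ∈ Finset.range (t + 1), w (k + 1)) :
    ∀ t : ℕ, ∀ v ∈ M,
      φ (wbar t) - φ v + (wbar t - v) ⬝ᵥ J v ≤
        (1 / (2 * ((t : ℝ) + 1))) * ((w 0 - v) ⬝ᵥ (G *ᵥ (w 0 - v))) :=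
  stmt10_general f g hf hg A B c τ M φ hφ J hJ G hG w hineq wbar hwbar
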